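/- Let H be a real inner product space, θ ∈ [0,1], M ≥ 2, and let ε₁, …, ε_{M−1} ∈ (−1,1). For n = 1, …, M−1 denote by α₀, α₁, α₂ the DLN α-coefficients and by β₀⁽ⁿ⁾, β₁⁽ⁿ⁾, β₂⁽ⁿ⁾ the DLN β-coefficients with variability εₙ, and by a₀⁽ⁿ⁾, a₁⁽ⁿ⁾, a₂⁽ⁿ⁾ the auxiliary coefficients with variability εₙ. Then for every sequence v₀, v₁, …, v_M in H, Σ_{n=1}^{M−1} ⟨α₂v_{n+1}+α₁v_n+α₀v_{n−1}, β₂⁽ⁿ⁾v_{n+1}+β₁⁽ⁿ⁾v_n+β₀⁽ⁿ⁾v_{n−1}⟩ = ‖(v_M, v_{M−1})‖²_{G(θ)} − ‖(v_1, v_0)‖²_{G(θ)} + Σ_{n=1}^{M−1} ‖a₂⁽ⁿ⁾v_{n+1}+a₁⁽ⁿ⁾v_n+a₀⁽ⁿ⁾v_{n−1}‖². -/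

import Mathlib

open scoped RealInnerProductSpace

noncomputable def dlnAlpha2 (θ : ℝ) : ℝ := (1 + θ) / 2
noncomputable def dlnAlpha1 (θ : ℝ) : ℝ := -θ
noncomputable def dlnAlpha0 (θ : ℝ) : ℝ := (θ - 1) / 2

noncomputable def dlnBeta2 (θ ε : ℝ) : ℝ :=
  (1 / 4) * (1 + (1 - θ ^ 2) / (1 + ε * θ) ^ 2
    + ε ^ 2 * (θ * (1 - θ ^ 2)) / (1 + ε * θ) ^ 2 + θ)
noncomputable def dlnBeta1 (θ ε : ℝ) : ℝ :=
  (1 / 2) * (1 - (1 - θ ^ 2) / (1 + ε * θ) ^ 2)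
noncomputable def dlnBeta0 (θ ε : ℝ) : ℝ :=
  (1 / 4) * (1 + (1 - θ ^ 2) / (1 + ε * θ) ^ 2
    - ε ^ 2 * (θ * (1 - θ ^ 2)) / (1 + ε * θ) ^ 2 - θ)

noncomputable def dlnA1 (θ ε : ℝ) : ℝ :=
  -(Real.sqrt (θ * (1 - θ ^ 2))) / (Real.sqrt 2 * (1 + ε * θ))
noncomputable def dlnA2 (θ ε : ℝ) : ℝ := -((1 - ε) / 2) * dlnA1 θ ε
noncomputable def dlnA0 (θ ε : ℝ) : ℝ := -((1 + ε) / 2) * dlnA1 θ ε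

/-- The square of the `G(θ)`-norm of the pair `(u, v)`. -/
noncomputable def gNormSq {H : Type*} [NormedAddCommGroup H] (θ : ℝ) (u v : H) : ℝ :=
  ((1 + θ) / 4) * ‖u‖ ^ 2 + ((1 - θ) / 4) * ‖v‖ ^ 2

/-!
For each step the identity
`⟪α₂x + α₁y + α₀z, β₂x + β₁y + β₀z⟫ = ‖(x, y)‖²_G − ‖(y, z)‖²_G + ‖a₂x + a₁y + a₀z‖²`
holds for all `x y z`: both sides are quadratic forms in `(x, y, z)` whose coefficients agree
once `a₁² = θ(1 − θ²) / (2(1 + εθ)²)` is substituted and `(1 + εθ)²` is cleared.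
Summing it over `n` makes the `G`-norm differences telescope.
-/

section DLN

variable {θ ε : ℝ}

lemma dlnA1_sq (hθ : θ ∈ Set.Icc (0 : ℝ) 1) :
    dlnA1 θ ε ^ 2 = θ * (1 - θ ^ 2) / (2 * (1 + ε * θ) ^ 2) := by
  obtain ⟨hθ0, hθ1⟩ := hθ
  have hθ_nonneg : 0 ≤ θ * (1 - θ ^ 2) := mul_nonneg hθ0 (by nlinarith)
  rw [dlnA1, div_pow, neg_sq, mul_pow, Real.sq_sqrt hθ_nonneg,
    Real.sq_sqrt zero_le_two]

variable {H : Type*} [NormedAddCommGroup H] [InnerProductSpace ℝ H]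

lemma dlnA_combination_eq_smul (x y z : H) :
    dlnA2 θ ε • x + dlnA1 θ ε • y + dlnA0 θ ε • z
      = (-dlnA1 θ ε) • (((1 - ε) / 2) • x - y + ((1 + ε) / 2) • z) := by
  rw [dlnA2, dlnA0]
  module

lemma norm_dlnA_combination_sq (hθ : θ ∈ Set.Icc (0 : ℝ) 1) (x y z : H) :
    ‖dlnA2 θ ε • x + dlnA1 θ ε • y + dlnA0 θ ε • z‖ ^ 2
      = θ * (1 - θ ^ 2) / (2 * (1 + ε * θ) ^ 2)
        * ‖((1 - ε) / 2) • x - y + ((1 + ε) / 2) • z‖ ^ 2 := by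
  rw [dlnA_combination_eq_smul, norm_smul, mul_pow, Real.norm_eq_abs, sq_abs, neg_sq,
    dlnA1_sq hθ]

theorem dln_inner_eq_gNormSq_sub_add (hθ : θ ∈ Set.Icc (0 : ℝ) 1) (hε : 1 + ε * θ ≠ 0)
    (x y z : H) :
    ⟪dlnAlpha2 θ • x + dlnAlpha1 θ • y + dlnAlpha0 θ • z,
      dlnBeta2 θ ε • x + dlnBeta1 θ ε • y + dlnBeta0 θ ε • z⟫
      = gNormSq θ x y - gNormSq θ y z
        + ‖dlnA2 θ ε • x + dlnA1 θ ε • y + dlnA0 θ ε • z‖ ^ 2 := by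
  rw [norm_dlnA_combination_sq hθ, gNormSq, gNormSq, ← real_inner_self_eq_norm_sq x,
    ← real_inner_self_eq_norm_sq y, ← real_inner_self_eq_norm_sq z,
    ← real_inner_self_eq_norm_sq]
  simp only [inner_add_left, inner_add_right, inner_sub_left, inner_sub_right,
    real_inner_smul_left, real_inner_smul_right, dlnAlpha2, dlnAlpha1, dlnAlpha0, dlnBeta2,
    dlnBeta1, dlnBeta0]
  rw [real_inner_comm y x, real_inner_comm z x, real_inner_comm z y]
  have hε' : 1 + θ * ε ≠ 0 := by rwa [mul_comm]
  field_simp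
  ring

end DLN

/-- Telescoped G-stability identity of the variable-step DLN method. -/
theorem dln_G_stability_telescoped {H : Type*} [NormedAddCommGroup H] [InnerProductSpace ℝ H]
    (θ : ℝ) (hθ : θ ∈ Set.Icc (0 : ℝ) 1) (M : ℕ) (hM : 2 ≤ M)
    (ε : ℕ → ℝ) (hε : ∀ n, 1 ≤ n → n ≤ M - 1 → ε n ∈ Set.Ioo (-1 : ℝ) 1)
    (v : ℕ → H) :
    ∑ n ∈ Finset.Icc 1 (M - 1),
        ⟪dlnAlpha2 θ • v (n + 1) + dlnAlpha1 θ • v n + dlnAlpha0 θ • v (n - 1),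
          dlnBeta2 θ (ε n) • v (n + 1) + dlnBeta1 θ (ε n) • v n
            + dlnBeta0 θ (ε n) • v (n - 1)⟫
      = gNormSq θ (v M) (v (M - 1)) - gNormSq θ (v 1) (v 0)
        + ∑ n ∈ Finset.Icc 1 (M - 1),
            ‖dlnA2 θ (ε n) • v (n + 1) + dlnA1 θ (ε n) • v n
              + dlnA0 θ (ε n) • v (n - 1)‖ ^ 2 := by
  have step : ∀ n ∈ Finset.Icc 1 (M - 1), _ := fun n hn ↦ by
    obtain ⟨hn1, hnM⟩ := Finset.mem_Icc.mp hn
    obtain ⟨hε_gt, hε_lt⟩ := hε n hn1 hnM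
    have hden : 0 < 1 + ε n * θ := by nlinarith [hθ.1, hθ.2]
    exact dln_inner_eq_gNormSq_sub_add hθ hden.ne' (v (n + 1)) (v n) (v (n - 1))
  have telescope := Finset.sum_Icc_sub (by omega : 1 ≤ M - 1)
    (fun n ↦ gNormSq θ (v n) (v (n - 1)))
  rw [Nat.sub_add_cancel (by omega)] at telescope
  rw [Finset.sum_congr rfl step, Finset.sum_add_distrib, ← telescope]
  rfl
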